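/- arXiv:1411.4477 — 2 statements merged into one kernel-verified Lean document; each statement's English description precedes it below -/
import Mathlib

section
/- Let X_1,…,X_n be the indicators of red draws in the Pólya urn model, let X_n' be a random variable whose conditional distribution given (X_1,…,X_n) equals the conditional distribution of X_n given (X_1,…,X_{n−1}), let W = (1/n)∑_{j=1}^n X_j and W' = W − X_n/n + X_n'/n. Then E[W' − W | W] = ((a+b)/(n(a+b+n−1)))·(a/(a+b) − W); that is, E[W' − W | W] = λ·γ_{a,b}(W) with γ_{a,b}(x) = (a+b)(a/(a+b) − x) and λ = 1/(n(a+b+n−1)). -/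
/-!
On the event that the draws form the pattern `x`, the predictive rule of the urn gives
`P(X' = 1 | X = x) = (r + c m) / (r + w + c (n - 1))`, with `m` the number of red balls among the
first `n - 1` draws. As `W` takes finitely many values, `E[W' - W | W]` is determined by the
integrals of `W' - W` over the level sets `{∑ X_j = k}`. Summing over the patterns with `k` red
balls, exchangeability replaces `X_n` by its average `k / n`, and
`(r + c (k - k / n)) / (r + w + c (n - 1)) - k / n = n λ γ_{a,b}(k / n)`.
-/

open MeasureTheory Set Filter Topology

noncomputable section

/-- The Pólya pmf of the vector `(X_1, …, X_n)` of indicators of red draws, evaluated at a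
pattern `x ∈ {0,1}ⁿ` (as a `Bool`-vector): with `k = ∑ x_j`,
`P(X = x) = ∏_{i<k}(r+ci) ∏_{j<n-k}(w+cj) / ∏_{l<n}(r+w+cl)`. -/
def polyaPMF (n r w c : ℕ) (x : Fin n → Bool) : ℝ :=
  ((∏ i ∈ Finset.range (Finset.univ.filter (fun j => x j = true)).card, ((r : ℝ) + c * i)) *
      ∏ j ∈ Finset.range (n - (Finset.univ.filter (fun j => x j = true)).card),
        ((w : ℝ) + c * j)) /
    ∏ l ∈ Finset.range n, ((r : ℝ) + w + c * l)

def countTrue {n : ℕ} (x : Fin n → Bool) : ℕ := (Finset.univ.filter (fun j => x j = true)).card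

lemma countTrue_comp_perm {n : ℕ} (x : Fin n → Bool) (σ : Equiv.Perm (Fin n)) :
    countTrue (x ∘ σ) = countTrue x := by
  simp only [countTrue, Finset.card_filter]
  exact Equiv.sum_comp σ (fun j => if x j = true then 1 else 0)

lemma countTrue_update_false_add {n : ℕ} (x : Fin n → Bool) (l : Fin n) :
    countTrue (Function.update x l false) + (x l).toNat = countTrue x := by
  cases hxl : x l
  · simp [← hxl]
  · have : Finset.univ.filter (fun j => x j = true)
        = insert l (Finset.univ.filter (fun j => Function.update x l false j = true)) := by
      ext j
      by_cases hj : j = l <;> simp [hj, hxl, Function.update_apply]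
    simp [countTrue, this, Finset.card_insert_of_notMem]

lemma countTrue_update_false_lt {n : ℕ} (x : Fin n → Bool) (l : Fin n) :
    countTrue (Function.update x l false) < n := by
  calc countTrue (Function.update x l false) ≤ (Finset.univ.erase l).card := by
        refine Finset.card_le_card fun j hj => Finset.mem_erase.2 ⟨?_, Finset.mem_univ j⟩
        rintro rfl
        simp at hj
    _ < n := by simp [Finset.card_erase_of_mem, l.pos]

open Finset in
lemma card_countTrue_eq_apply_eq_true (n k : ℕ) (l : Fin n) :
    n * #{x : Fin n → Bool | countTrue x = k ∧ x l = true}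
      = k * #{x : Fin n → Bool | countTrue x = k} := by
  have hswap (j : Fin n) : #{x : Fin n → Bool | countTrue x = k ∧ x j = true}
      = #{x : Fin n → Bool | countTrue x = k ∧ x l = true} := by
    refine card_nbij' (· ∘ Equiv.swap j l) (· ∘ Equiv.swap j l) ?_ ?_ ?_ ?_ <;> intro x <;>
      simp [countTrue_comp_perm, funext_iff]
  have hcount : ∀ x ∈ ({x : Fin n → Bool | countTrue x = k} : Finset _),
      #{j | x j = true} = k := fun x hx => (mem_filter.1 hx).2
  have hdouble := sum_card_bipartiteAbove_eq_sum_card_bipartiteBelow (s := univ)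
    (t := {x : Fin n → Bool | countTrue x = k}) (fun j x => x j = true)
  simp only [bipartiteAbove, bipartiteBelow, filter_filter, hswap] at hdouble
  rw [sum_const, card_univ, Fintype.card_fin, smul_eq_mul, sum_congr rfl hcount, sum_const,
    smul_eq_mul] at hdouble
  rw [hdouble, mul_comm]

open Finset in
lemma sum_countTrue_eq_sub_mul_ite {n : ℕ} (k : ℕ) (l : Fin n) (α β : ℝ) :
    ∑ x : Fin n → Bool with countTrue x = k, (α - β * if x l then 1 else 0) =
      #{x : Fin n → Bool | countTrue x = k} * (α - β * (k / n)) := by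
  have hn : (n : ℝ) ≠ 0 := by exact_mod_cast l.pos.ne'
  have hcount : (n : ℝ) * #{x : Fin n → Bool | countTrue x = k ∧ x l = true} =
      k * #{x : Fin n → Bool | countTrue x = k} := by
    exact_mod_cast card_countTrue_eq_apply_eq_true n k l
  rw [sum_sub_distrib, sum_const, nsmul_eq_mul, ← mul_sum, sum_boole, filter_filter]
  field_simp
  linear_combination -β * hcount

def polyaWeight (n r w c k : ℕ) : ℝ :=
  ((∏ i ∈ Finset.range k, ((r : ℝ) + c * i)) * ∏ j ∈ Finset.range (n - k), ((w : ℝ) + c * j)) /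
    ∏ l ∈ Finset.range n, ((r : ℝ) + w + c * l)

lemma polyaPMF_eq_polyaWeight (n r w c : ℕ) (x : Fin n → Bool) :
    polyaPMF n r w c x = polyaWeight n r w c (countTrue x) := rfl

lemma polyaWeight_pos {n r w : ℕ} (c : ℕ) (hr : 0 < r) (hw : 0 < w) (k : ℕ) :
    0 < polyaWeight n r w c k := by
  unfold polyaWeight
  refine div_pos (mul_pos ?_ ?_) ?_ <;> exact Finset.prod_pos fun i _ => by positivity

-- The predictive rule: a pattern with `m + 1` reds ending in red has weight `polyaWeight (m + 1)`,
-- its first `n - 1` draws have weight `polyaWeight m + polyaWeight (m + 1)`, and the ratio is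
-- `(r + c m) / (r + w + c (n - 1))`.
lemma polyaWeight_succ_mul {n m : ℕ} (r w c : ℕ) (hm : m < n) :
    polyaWeight n r w c (m + 1) * ((r : ℝ) + w + c * ((n : ℝ) - 1)) =
      (polyaWeight n r w c m + polyaWeight n r w c (m + 1)) * ((r : ℝ) + c * m) := by
  have hnm : n - m = n - (m + 1) + 1 := by omega
  have hcast : ((n - (m + 1) : ℕ) : ℝ) = (n : ℝ) - 1 - m := by
    rw [Nat.cast_sub (by omega)]; push_cast; ring
  unfold polyaWeight
  rw [hnm, Finset.prod_range_succ, Finset.prod_range_succ, hcast, ← add_div,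
    div_mul_eq_mul_div, div_mul_eq_mul_div]
  ring

lemma polya_regression_identity {n r w c : ℕ} (hn : 0 < n) (hr : 0 < r) (hc : 0 < c)
    {A B : ℝ} (hA : A = (r : ℝ) / c) (hB : B = (w : ℝ) / c) (k : ℝ) :
    (((r : ℝ) + c * k) / ((r : ℝ) + w + c * ((n : ℝ) - 1)) -
        ((c : ℝ) / ((r : ℝ) + w + c * ((n : ℝ) - 1)) + 1) * (k / n)) / n =
      1 / (n * (A + B + n - 1)) * ((A + B) * (A / (A + B) - k / n)) := by
  subst hA hB
  have hn1 : (1 : ℝ) ≤ n := by exact_mod_cast hn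
  have hr0 : (0 : ℝ) < r := by exact_mod_cast hr
  have hc0 : (0 : ℝ) < c := by exact_mod_cast hc
  have hD : (0 : ℝ) < r + w + c * ((n : ℝ) - 1) := by positivity
  have hAB : (r : ℝ) / c + w / c + n - 1 = (r + w + c * ((n : ℝ) - 1)) / c := by
    field_simp; ring
  have hrw : (r : ℝ) / c + w / c ≠ 0 := by positivity
  rw [hAB]
  field_simp
  ring

section Patterns

variable {Ω : Type*} {n : ℕ}

def patternSet (X : Fin n → Ω → ℝ) (x : Fin n → Bool) : Set Ω :=
  {ω | ∀ j, X j ω = if x j then 1 else 0}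

def patternSetExcept (X : Fin n → Ω → ℝ) (l : Fin n) (x : Fin n → Bool) : Set Ω :=
  {ω | ∀ j ≠ l, X j ω = if x j then 1 else 0}

variable {X : Fin n → Ω → ℝ}

lemma measurableSet_patternSet [MeasurableSpace Ω] (hXm : ∀ j, Measurable (X j))
    (x : Fin n → Bool) : MeasurableSet (patternSet X x) := by
  simp only [patternSet, Set.ofPred_forall]
  exact MeasurableSet.iInter fun j => hXm j (measurableSet_singleton _)

lemma pairwise_disjoint_patternSet : Pairwise (Function.onFun Disjoint (patternSet X)) := by
  intro x y hxy
  obtain ⟨j, hj⟩ := Function.ne_iff.1 hxy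
  refine Set.disjoint_left.2 fun ω hx hy => hj ?_
  have := (hx j).symm.trans (hy j)
  cases hxj : x j <;> cases hyj : y j <;> simp_all

lemma mem_patternSet_decide (hXval : ∀ j ω, X j ω = 0 ∨ X j ω = 1) (ω : Ω) :
    ω ∈ patternSet X (fun j => decide (X j ω = 1)) := fun j => by
  rcases hXval j ω with h | h <;> simp [h]

lemma sum_eq_countTrue_of_mem_patternSet {x : Fin n → Bool} {ω : Ω}
    (hω : ω ∈ patternSet X x) : ∑ j, X j ω = countTrue x := by
  simp [Finset.sum_congr rfl fun j _ => hω j, countTrue, Finset.sum_boole]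

lemma mem_patternSet_update_iff {x : Fin n → Bool} {l : Fin n} {b : Bool} {ω : Ω} :
    ω ∈ patternSet X (Function.update x l b) ↔
      (X l ω = if b then 1 else 0) ∧ ∀ j ≠ l, X j ω = if x j then 1 else 0 := by
  simp only [patternSet, Set.mem_ofPred_eq]
  refine ⟨fun h => ⟨by simpa using h l, fun j hj => by simpa [hj] using h j⟩, fun h j => ?_⟩
  by_cases hj : j = l
  · subst hj; simpa using h.1
  · simpa [hj] using h.2 j hj

lemma patternSetExcept_eq_union (hXval : ∀ j ω, X j ω = 0 ∨ X j ω = 1) (l : Fin n)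
    (x : Fin n → Bool) : patternSetExcept X l x =
      patternSet X (Function.update x l false) ∪ patternSet X (Function.update x l true) := by
  ext ω
  simp only [patternSetExcept, Set.mem_union, mem_patternSet_update_iff, Set.mem_ofPred_eq]
  rcases hXval l ω with h | h <;> simp [h]

lemma setOf_eq_one_inter_patternSetExcept (l : Fin n) (x : Fin n → Bool) :
    {ω | X l ω = 1} ∩ patternSetExcept X l x = patternSet X (Function.update x l true) := by
  ext ω
  simp [patternSetExcept, mem_patternSet_update_iff]

end Patterns

lemma indicator_setOf_eq_one_eq_self {Ω : Type*} {f : Ω → ℝ} (h01 : ∀ ω, f ω = 0 ∨ f ω = 1) :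
    {ω | f ω = 1}.indicator 1 = f := by
  funext ω
  rcases h01 ω with h | h <;> simp [h]

section ZeroOne

variable {Ω : Type*} [MeasurableSpace Ω] {μ : Measure Ω} {f : Ω → ℝ}

lemma integrable_of_eq_zero_or_one [IsFiniteMeasure μ] (hf : Measurable f)
    (h01 : ∀ ω, f ω = 0 ∨ f ω = 1) : Integrable f μ :=
  indicator_setOf_eq_one_eq_self h01 ▸
    (integrable_const 1).indicator (hf (measurableSet_singleton 1))

lemma setIntegral_eq_measureReal_setOf_eq_one_inter (hf : Measurable f)
    (h01 : ∀ ω, f ω = 0 ∨ f ω = 1) (s : Set Ω) :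
    ∫ ω in s, f ω ∂μ = μ.real ({ω | f ω = 1} ∩ s) := by
  have hmeas : MeasurableSet {ω | f ω = 1} := hf (measurableSet_singleton 1)
  conv_lhs => rw [← indicator_setOf_eq_one_eq_self h01]
  rw [setIntegral_indicator hmeas, Pi.one_def, setIntegral_const,
    smul_eq_mul, mul_one, Set.inter_comm]

end ZeroOne

open Finset in
lemma setIntegral_preimage_eq_of_sum_fiber_eq {Ω ι β α E : Type*} [MeasurableSpace Ω]
    {μ : Measure Ω} [NormedAddCommGroup E] [NormedSpace ℝ E] [Fintype ι] [DecidableEq β]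
    {P : ι → Set Ω} (hPm : ∀ i, MeasurableSet (P i))
    (hPd : Pairwise (Function.onFun Disjoint P)) (hPcover : ∀ ω, ∃ i, ω ∈ P i)
    {κ : ι → β} {ψ : β → α} {W : Ω → α} (hW : ∀ i, ∀ ω ∈ P i, W ω = ψ (κ i))
    {f g : Ω → E} (hf : Integrable f μ) (hg : Integrable g μ)
    (hfg : ∀ b, ∑ i with κ i = b, ∫ ω in P i, f ω ∂μ = ∑ i with κ i = b, ∫ ω in P i, g ω ∂μ)
    (t : Set α) : ∫ ω in W ⁻¹' t, f ω ∂μ = ∫ ω in W ⁻¹' t, g ω ∂μ := by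
  classical
  have hpre : W ⁻¹' t = ⋃ i ∈ ({i | ψ (κ i) ∈ t} : Finset ι), P i := by
    ext ω
    obtain ⟨i, hi⟩ := hPcover ω
    simp only [Set.mem_preimage, Set.mem_iUnion, mem_filter, Finset.mem_univ, true_and, exists_prop]
    refine ⟨fun h => ⟨i, hW i ω hi ▸ h, hi⟩, fun ⟨j, hj, hω⟩ => hW j ω hω ▸ hj⟩
  have hsum (h : Ω → E) (hh : Integrable h μ) : ∫ ω in W ⁻¹' t, h ω ∂μ =
      ∑ b ∈ univ.image κ with ψ b ∈ t, ∑ i with κ i = b, ∫ ω in P i, h ω ∂μ := by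
    rw [hpre, integral_biUnion_finset _ (fun i _ => hPm i) (fun i _ j _ hij => hPd hij)
      (fun i _ => hh.integrableOn), sum_filter, sum_filter,
      ← sum_fiberwise_of_maps_to (g := κ) (fun i _ => mem_image_of_mem κ (mem_univ i))]
    refine sum_congr rfl fun b _ => ?_
    split_ifs with hb
    · exact sum_congr rfl fun i hi => by rw [(mem_filter.1 hi).2, if_pos hb]
    · exact sum_eq_zero fun i hi => by rw [(mem_filter.1 hi).2, if_neg hb]
  rw [hsum f hf, hsum g hg]
  exact sum_congr rfl fun b _ => hfg b

open Finset in
lemma condExp_comap_ae_eq_of_sum_fiber_eq {Ω ι β α : Type*} [MeasurableSpace Ω]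
    [MeasurableSpace α] {μ : Measure Ω} [IsFiniteMeasure μ] [Fintype ι] [DecidableEq β]
    {P : ι → Set Ω} (hPm : ∀ i, MeasurableSet (P i))
    (hPd : Pairwise (Function.onFun Disjoint P)) (hPcover : ∀ ω, ∃ i, ω ∈ P i)
    {κ : ι → β} {ψ : β → α} {W : Ω → α} (hW : ∀ i, ∀ ω ∈ P i, W ω = ψ (κ i))
    (hWm : Measurable W) {f : Ω → ℝ} {φ : α → ℝ} (hf : Integrable f μ) (hφ : Measurable φ)
    (hφW : Integrable (fun ω => φ (W ω)) μ)
    (hfφ : ∀ b, ∑ i with κ i = b, ∫ ω in P i, f ω ∂μ = ∑ i with κ i = b, μ.real (P i) * φ (ψ b)) :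
    μ[f | MeasurableSpace.comap W inferInstance] =ᵐ[μ] fun ω => φ (W ω) := by
  refine (ae_eq_condExp_of_forall_setIntegral_eq hWm.comap_le hf
    (fun _ _ _ => hφW.integrableOn) ?_ (hφ.comp (comap_measurable W)).aestronglyMeasurable).symm
  rintro s ⟨t, -, rfl⟩ -
  refine setIntegral_preimage_eq_of_sum_fiber_eq hPm hPd hPcover hW hφW hf (fun b => ?_) t
  rw [hfφ]
  refine sum_congr rfl fun i hi => ?_
  rw [setIntegral_congr_fun (hPm i) fun ω hω => congrArg φ (hW i ω hω), (mem_filter.1 hi).2,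
    setIntegral_const, smul_eq_mul]

section Polya

variable {Ω : Type*} [MeasurableSpace Ω] {μ : Measure Ω} {n r w c : ℕ}
  {X : Fin n → Ω → ℝ} {X' : Ω → ℝ}

lemma measureReal_setOf_eq_one_inter_patternSet (hr : 0 < r)
    (hw : 0 < w) (hXm : ∀ j, Measurable (X j)) (hXval : ∀ j ω, X j ω = 0 ∨ X j ω = 1)
    (hjoint : ∀ x, μ (patternSet X x) = ENNReal.ofReal (polyaWeight n r w c (countTrue x)))
    (l : Fin n) (x : Fin n → Bool)
    (hcond : μ ({ω | X' ω = 1} ∩ patternSet X x) * μ (patternSetExcept X l x) =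
        μ (patternSet X x) * μ ({ω | X l ω = 1} ∩ patternSetExcept X l x)) :
    μ.real ({ω | X' ω = 1} ∩ patternSet X x) =
      polyaWeight n r w c (countTrue x) * ((r : ℝ) + c * countTrue (Function.update x l false)) /
        ((r : ℝ) + w + c * ((n : ℝ) - 1)) := by
  set m := countTrue (Function.update x l false)
  set p := polyaWeight n r w c
  have hp (k : ℕ) : 0 ≤ p k := (polyaWeight_pos c hr hw k).le
  have hm1 : countTrue (Function.update x l true) = m + 1 := by
    simpa using (countTrue_update_false_add (Function.update x l true) l).symm
  have hprefix : μ (patternSetExcept X l x) = ENNReal.ofReal (p m + p (m + 1)) := by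
    rw [patternSetExcept_eq_union hXval,
      measure_union (pairwise_disjoint_patternSet fun h => by simpa using congrFun h l)
        (measurableSet_patternSet hXm _), hjoint, hjoint, hm1, ENNReal.ofReal_add (hp m) (hp _)]
  have h := congrArg ENNReal.toReal hcond
  rw [ENNReal.toReal_mul, ENNReal.toReal_mul, hprefix, setOf_eq_one_inter_patternSetExcept,
    hjoint, hjoint, hm1, ENNReal.toReal_ofReal (add_nonneg (hp m) (hp _)),
    ENNReal.toReal_ofReal (hp _), ENNReal.toReal_ofReal (hp _), ← measureReal_def] at h
  have hD : (0 : ℝ) < r + w + c * ((n : ℝ) - 1) := by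
    have : (1 : ℝ) ≤ n := by exact_mod_cast l.pos
    have : (0 : ℝ) < r := by exact_mod_cast hr
    positivity
  rw [eq_div_iff hD.ne']
  have hS : 0 < p m + p (m + 1) := add_pos (polyaWeight_pos c hr hw m) (polyaWeight_pos c hr hw _)
  refine mul_right_cancel₀ hS.ne' ?_
  linear_combination ((r : ℝ) + w + c * ((n : ℝ) - 1)) * h +
    p (countTrue x) * polyaWeight_succ_mul r w c (countTrue_update_false_lt x l)

lemma setIntegral_patternSet_sub [IsFiniteMeasure μ] (hr : 0 < r) (hw : 0 < w)
    (hXm : ∀ j, Measurable (X j)) (hXval : ∀ j ω, X j ω = 0 ∨ X j ω = 1) (hX'm : Measurable X')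
    (hX'val : ∀ ω, X' ω = 0 ∨ X' ω = 1)
    (hjoint : ∀ x, μ (patternSet X x) = ENNReal.ofReal (polyaWeight n r w c (countTrue x)))
    (l : Fin n) (x : Fin n → Bool)
    (hcond : μ ({ω | X' ω = 1} ∩ patternSet X x) * μ (patternSetExcept X l x) =
        μ (patternSet X x) * μ ({ω | X l ω = 1} ∩ patternSetExcept X l x)) :
    ∫ ω in patternSet X x, (X' ω - X l ω) ∂μ =
      polyaWeight n r w c (countTrue x) *
        (((r : ℝ) + c * countTrue x) / ((r : ℝ) + w + c * ((n : ℝ) - 1)) -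
          ((c : ℝ) / ((r : ℝ) + w + c * ((n : ℝ) - 1)) + 1) * if x l then 1 else 0) := by
  have hXl : ∫ ω in patternSet X x, X l ω ∂μ = μ.real (patternSet X x) * if x l then 1 else 0 := by
    rw [setIntegral_congr_fun (measurableSet_patternSet hXm x) fun ω hω => hω l,
      setIntegral_const, smul_eq_mul]
  have hcount : (countTrue (Function.update x l false) : ℝ) =
      countTrue x - if x l then 1 else 0 := by
    rw [← countTrue_update_false_add x l]
    cases x l <;> simp
  rw [integral_sub (integrable_of_eq_zero_or_one hX'm hX'val).integrableOn
      (integrable_of_eq_zero_or_one (hXm l) (hXval l)).integrableOn,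
    setIntegral_eq_measureReal_setOf_eq_one_inter hX'm hX'val,
    measureReal_setOf_eq_one_inter_patternSet hr hw hXm hXval hjoint l x hcond, hXl,
    measureReal_def, hjoint, ENNReal.toReal_ofReal (polyaWeight_pos c hr hw _).le, hcount]
  ring

open Finset in
lemma sum_setIntegral_patternSet_sub_div [IsFiniteMeasure μ] (hr : 0 < r) (hw : 0 < w)
    (hc : 0 < c) {A B : ℝ} (hA : A = (r : ℝ) / c) (hB : B = (w : ℝ) / c)
    (hXm : ∀ j, Measurable (X j)) (hXval : ∀ j ω, X j ω = 0 ∨ X j ω = 1) (hX'm : Measurable X')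
    (hX'val : ∀ ω, X' ω = 0 ∨ X' ω = 1)
    (hjoint : ∀ x, μ (patternSet X x) = ENNReal.ofReal (polyaWeight n r w c (countTrue x)))
    (l : Fin n)
    (hcond : ∀ x, μ ({ω | X' ω = 1} ∩ patternSet X x) * μ (patternSetExcept X l x) =
        μ (patternSet X x) * μ ({ω | X l ω = 1} ∩ patternSetExcept X l x))
    (k : ℕ) :
    ∑ x with countTrue x = k, ∫ ω in patternSet X x, (X' ω - X l ω) / n ∂μ =
      ∑ x with countTrue x = k, μ.real (patternSet X x) *
        (1 / (n * (A + B + n - 1)) * ((A + B) * (A / (A + B) - k / n))) := by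
  have hfE (x : Fin n → Bool) := (integral_div (n : ℝ) _).trans <| congrArg (· / (n : ℝ)) <|
    setIntegral_patternSet_sub hr hw hXm hXval hX'm hX'val hjoint l x (hcond x)
  have hreal (x : Fin n → Bool) : μ.real (patternSet X x) = polyaWeight n r w c (countTrue x) := by
    rw [measureReal_def, hjoint, ENNReal.toReal_ofReal (polyaWeight_pos c hr hw _).le]
  simp only [hfE, hreal]
  conv_lhs => rw [sum_congr rfl fun x hx => by rw [(mem_filter.1 hx).2]]
  conv_rhs => rw [sum_congr rfl fun x hx => by rw [(mem_filter.1 hx).2]]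
  rw [sum_const, nsmul_eq_mul, ← sum_div, ← mul_sum, sum_countTrue_eq_sub_mul_ite,
    ← polya_regression_identity l.pos hr hc hA hB]
  ring

end Polya

/-- First regression property of the Pólya urn exchangeable pair:
`E[W' - W | W] = λ γ_{a,b}(W)` with `γ_{a,b}(x) = (a+b)(a/(a+b) - x)` and
`λ = 1/(n(a+b+n-1))`. -/
theorem polya_first_regression
    {Ω : Type*} [MeasurableSpace Ω] (μ : Measure Ω) [IsProbabilityMeasure μ]
    (n r w c : ℕ) (hn : 0 < n) (hr : 0 < r) (hw : 0 < w) (hc : 0 < c)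
    (X : Fin n → Ω → ℝ) (X' : Ω → ℝ)
    (hXm : ∀ j, Measurable (X j)) (hX'm : Measurable X')
    (hXval : ∀ j ω, X j ω = 0 ∨ X j ω = 1) (hX'val : ∀ ω, X' ω = 0 ∨ X' ω = 1)
    (hjoint : ∀ x : Fin n → Bool,
      μ {ω | ∀ j, X j ω = if x j then 1 else 0} = ENNReal.ofReal (polyaPMF n r w c x))
    (hcond : ∀ x : Fin n → Bool,
      μ ({ω | X' ω = 1} ∩ {ω | ∀ j, X j ω = if x j then 1 else 0}) *
          μ {ω | ∀ j : Fin n, (j : ℕ) < n - 1 → X j ω = if x j then 1 else 0} =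
        μ {ω | ∀ j, X j ω = if x j then 1 else 0} *
          μ ({ω | X ⟨n - 1, Nat.sub_lt hn Nat.one_pos⟩ ω = 1} ∩
            {ω | ∀ j : Fin n, (j : ℕ) < n - 1 → X j ω = if x j then 1 else 0}))
    (A B : ℝ) (hA : A = (r : ℝ) / c) (hB : B = (w : ℝ) / c)
    (W W' : Ω → ℝ)
    (hW : W = fun ω => (∑ j, X j ω) / n)
    (hW' : W' = fun ω => W ω - X ⟨n - 1, Nat.sub_lt hn Nat.one_pos⟩ ω / n + X' ω / n) :
    μ[(fun ω => W' ω - W ω) | MeasurableSpace.comap W inferInstance] =ᵐ[μ]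
      fun ω => (1 / (n * (A + B + n - 1))) * ((A + B) * (A / (A + B) - W ω)) := by
  set l : Fin n := ⟨n - 1, Nat.sub_lt hn Nat.one_pos⟩
  have hprefix (x : Fin n → Bool) :
      {ω | ∀ j : Fin n, (j : ℕ) < n - 1 → X j ω = if x j then 1 else 0} =
        patternSetExcept X l x := by
    ext ω
    refine forall_congr' fun j => imp_congr_left ?_
    simp only [ne_eq, Fin.ext_iff, l]
    omega
  have hdiff : (fun ω => W' ω - W ω) = fun ω => (X' ω - X l ω) / n := by
    funext ω; rw [hW']; ring
  have hXint (j : Fin n) : Integrable (X j) μ := integrable_of_eq_zero_or_one (hXm j) (hXval j)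
  have hWm : Measurable W := hW ▸ (Finset.measurable_sum _ fun j _ => hXm j).div_const _
  have hWint : Integrable W μ := hW ▸ (integrable_finsetSum _ fun j _ => hXint j).div_const _
  have hWE (x : Fin n → Bool) (ω : Ω) (hω : ω ∈ patternSet X x) : W ω = countTrue x / n := by
    simp only [hW, sum_eq_countTrue_of_mem_patternSet hω]
  rw [hdiff]
  refine condExp_comap_ae_eq_of_sum_fiber_eq (measurableSet_patternSet hXm)
    pairwise_disjoint_patternSet (fun ω => ⟨_, mem_patternSet_decide hXval ω⟩)
    (κ := countTrue) (ψ := fun k => (k : ℝ) / n) hWE hWm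
    (((integrable_of_eq_zero_or_one hX'm hX'val).sub (hXint l)).div_const _)
    (φ := fun v => 1 / (n * (A + B + n - 1)) * ((A + B) * (A / (A + B) - v))) (by fun_prop)
    (((integrable_const _).sub hWint).const_mul _ |>.const_mul _) fun k => ?_
  exact sum_setIntegral_patternSet_sub_div hr hw hc hA hB hXm hXval hX'm hX'val hjoint l
    (fun x => hprefix x ▸ hcond x) k
end
end

section
/- Assume E|Z| < ∞ and Conditions 1 and 2. Then for every Lipschitz-continuous test function h on the closure of (a,b) and every x in (a,b), the standard solution g_h satisfies |g_h(x)| ≤ ‖h'‖ · ( F(x)·E[Z] − ∫_a^x y·p(y) dy ) / I(x) = ‖h'‖ · ( ∫_a^x (E[Z] − y)·p(y) dy ) / I(x), where ‖h'‖ denotes the minimum Lipschitz constant of h. Moreover this bound is optimal among all bounds involving the factor ‖h'‖ (equality holds for h(x) = x). -/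
open MeasureTheory Set Filter Topology

noncomputable section

/-- The open interval `(a,b)` with extended-real endpoints, viewed as a set of reals. -/
def ooE (a b : EReal) : Set ℝ := {x : ℝ | a < (x : EReal) ∧ (x : EReal) < b}

/-- The closed interval `[a,b] ∩ ℝ` (the closure of `(a,b)` in `ℝ`). -/
def ccE (a b : EReal) : Set ℝ := {x : ℝ | a ≤ (x : EReal) ∧ (x : EReal) ≤ b}

/-- The filter on `ℝ` of right-neighbourhoods of the (possibly infinite) endpoint `a`:
for finite `a` this is `𝓝[>] a`, for `a = ⊥` it is `atBot`. -/
def nhdsGT (a : EReal) : Filter ℝ :=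
  Filter.comap (fun x : ℝ => (x : EReal)) (nhdsWithin a (Set.Ioi a))

/-- The filter on `ℝ` of left-neighbourhoods of the (possibly infinite) endpoint `b`. -/
def nhdsLT (b : EReal) : Filter ℝ :=
  Filter.comap (fun x : ℝ => (x : EReal)) (nhdsWithin b (Set.Iio b))

/-- `f` is (locally) an indefinite integral of `f'` on `s`. -/
def IsLocACOn (f f' : ℝ → ℝ) (s : Set ℝ) : Prop :=
  ∀ x ∈ s, ∀ y ∈ s, IntervalIntegrable f' volume x y ∧ f y - f x = ∫ t in x..y, f' t

/-- `f` is locally absolutely continuous on `s`. -/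
def LocACOn (f : ℝ → ℝ) (s : Set ℝ) : Prop := ∃ f', IsLocACOn f f' s

/-- Condition 1: `p` is a probability density which is positive and locally absolutely
continuous on `(a,b)` and vanishes outside of `(a,b)`. -/
structure Cond1 (a b : EReal) (p : ℝ → ℝ) : Prop where
  lt : a < b
  meas : Measurable p
  nonneg : ∀ x, 0 ≤ p x
  pos : ∀ x ∈ ooE a b, 0 < p x
  zero : ∀ x, x ∉ ooE a b → p x = 0
  integrable : MeasureTheory.Integrable p
  total : ∫ x, p x = 1
  locAC : LocACOn p (ooE a b)

/-- Condition 2: `γ` is Borel measurable, not identically zero, decreasing on `[a,b]`,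
with `E|γ(Z)| < ∞` and `E[γ(Z)] = 0`. -/
structure Cond2 (a b : EReal) (p γ : ℝ → ℝ) : Prop where
  meas : Measurable γ
  ne_zero : ∃ x ∈ ccE a b, γ x ≠ 0
  anti : AntitoneOn γ (ccE a b)
  integrable : MeasureTheory.Integrable (fun x => γ x * p x)
  mean_zero : ∫ x, γ x * p x = 0

/-- `I(x) = ∫_a^x γ(t) p(t) dt` (the density vanishes outside `(a,b)`). -/
def Ifun (γ p : ℝ → ℝ) (x : ℝ) : ℝ := ∫ t in Iic x, γ t * p t

/-- The distribution function `F` of the density `p`. -/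
def Ffun (p : ℝ → ℝ) (x : ℝ) : ℝ := ∫ t in Iic x, p t

/-- `η = I/p`. -/
def etaFun (γ p : ℝ → ℝ) (x : ℝ) : ℝ := Ifun γ p x / p x

/-- `x₀ = sup {x ∈ (a,b) : γ(x) > 0}`. -/
def xZero (a b : EReal) (γ : ℝ → ℝ) : ℝ := sSup {x | x ∈ ooE a b ∧ 0 < γ x}

/-- `E[h(Z)]` for `Z` with density `p`. -/
def meanOf (p h : ℝ → ℝ) : ℝ := ∫ x, h x * p x

/-- The standard solution `g_h` of the Stein equation `η g' + γ g = h - E[h(Z)]`. -/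
def gsol (γ p h : ℝ → ℝ) (x : ℝ) : ℝ :=
  (∫ t in Iic x, (h t - meanOf p h) * p t) / (p x * etaFun γ p x)

/-- The derivative of the standard solution, defined everywhere via the Stein equation. -/
def gsol' (γ p h : ℝ → ℝ) (x : ℝ) : ℝ :=
  (h x - meanOf p h - γ x * gsol γ p h x) / etaFun γ p x

-- helper lemmas

lemma measurableSet_ccE (a b : EReal) : MeasurableSet (ccE a b) := by
  have : ccE a b = (fun x : ℝ => (x : EReal)) ⁻¹' (Icc a b) := rfl
  rw [this]
  exact measurable_coe_real_ereal measurableSet_Icc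

lemma ooE_subset_ccE (a b : EReal) : ooE a b ⊆ ccE a b := fun x hx => ⟨hx.1.le, hx.2.le⟩

lemma integral_Iic_add_Ioi {f : ℝ → ℝ} (hf : Integrable f) (x : ℝ) :
    (∫ t in Iic x, f t) + ∫ t in Ioi x, f t = ∫ t, f t := by
  rw [show Ioi x = (Iic x)ᶜ from compl_Iic.symm]
  exact integral_add_compl measurableSet_Iic hf

lemma Ifun_nonneg (a b : EReal) (p γ : ℝ → ℝ) (h1 : Cond1 a b p) (h2 : Cond2 a b p γ)
    (x : ℝ) (hx : x ∈ ooE a b) : 0 ≤ Ifun γ p x := by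
  have hxc : x ∈ ccE a b := ooE_subset_ccE a b hx
  rcases le_or_gt 0 (γ x) with hγ | hγ
  · apply setIntegral_nonneg measurableSet_Iic
    intro t ht
    by_cases htm : t ∈ ooE a b
    · have h2' : γ x ≤ γ t := h2.anti (ooE_subset_ccE a b htm) hxc ht
      exact mul_nonneg (le_trans hγ h2') (h1.nonneg t)
    · simp [h1.zero t htm]
  · have hsplit := integral_Iic_add_Ioi h2.integrable x
    rw [h2.mean_zero] at hsplit
    have h2' : ∫ t in Ioi x, γ t * p t ≤ 0 := by
      apply setIntegral_nonpos measurableSet_Ioi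
      intro t ht
      by_cases htm : t ∈ ooE a b
      · have hle : γ t ≤ γ x := h2.anti hxc (ooE_subset_ccE a b htm) ht.le
        exact mul_nonpos_iff.2 (Or.inr ⟨hle.trans hγ.le, h1.nonneg t⟩)
      · simp [h1.zero t htm]
    have : Ifun γ p x = - ∫ t in Ioi x, γ t * p t := by unfold Ifun; linarith
    rw [this]; linarith

lemma N_nonpos (a b : EReal) (p : ℝ → ℝ) (h1 : Cond1 a b p) (x : ℝ)
    (f : ℝ → ℝ) (hf : Integrable (fun t => f t * p t))
    (hle : ∀ t ∈ ooE a b, t ≤ x → f t ≤ f x)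
    (hge : ∀ t ∈ ooE a b, x < t → f x ≤ f t) :
    ∫ t in Iic x, (f t - ∫ y, f y * p y) * p t ≤ 0 := by
  set M := ∫ y, f y * p y with hM
  set F := ∫ t in Iic x, p t with hFdef
  have hF0 : 0 ≤ F := setIntegral_nonneg measurableSet_Iic (fun t _ => h1.nonneg t)
  have hFs : F + ∫ t in Ioi x, p t = 1 := by
    have := integral_Iic_add_Ioi h1.integrable x
    rw [h1.total] at this; exact this
  have hIoiP : 0 ≤ ∫ t in Ioi x, p t :=
    setIntegral_nonneg measurableSet_Ioi (fun t _ => h1.nonneg t)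
  have hF1 : F ≤ 1 := by linarith
  have hA : ∫ t in Iic x, f t * p t ≤ f x * F := by
    have hc : ∫ t in Iic x, f x * p t = f x * F := by
      rw [integral_const_mul]
    rw [← hc]
    apply setIntegral_mono_on hf.integrableOn
      ((h1.integrable.const_mul (f x)).integrableOn) measurableSet_Iic
    intro t ht
    by_cases htm : t ∈ ooE a b
    · exact mul_le_mul_of_nonneg_right (hle t htm ht) (h1.nonneg t)
    · simp [h1.zero t htm]
  have hB : f x * (1 - F) ≤ ∫ t in Ioi x, f t * p t := by
    have hc : ∫ t in Ioi x, f x * p t = f x * (1 - F) := by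
      rw [integral_const_mul]
      congr 1
      linarith
    rw [← hc]
    apply setIntegral_mono_on ((h1.integrable.const_mul (f x)).integrableOn)
      hf.integrableOn measurableSet_Ioi
    intro t ht
    by_cases htm : t ∈ ooE a b
    · exact mul_le_mul_of_nonneg_right (hge t htm ht) (h1.nonneg t)
    · simp [h1.zero t htm]
  have hsplit : (∫ t in Iic x, f t * p t) + ∫ t in Ioi x, f t * p t = M :=
    integral_Iic_add_Ioi hf x
  have hN : ∫ t in Iic x, (f t - M) * p t = (∫ t in Iic x, f t * p t) - M * F := by
    have e : (fun t => (f t - M) * p t) = fun t => f t * p t - M * p t :=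
      funext fun t => by ring
    rw [e, integral_sub hf.integrableOn ((h1.integrable.const_mul M).integrableOn),
      integral_const_mul]
  rw [hN]
  nlinarith [mul_le_mul_of_nonneg_right hA (sub_nonneg.2 hF1),
    mul_le_mul_of_nonneg_right hB hF0]

lemma N_comb (p : ℝ → ℝ) (hp : Integrable p) (h : ℝ → ℝ) (d c x : ℝ)
    (hh : Integrable (fun t => h t * p t)) (hid : Integrable (fun t => t * p t)) :
    ∫ t in Iic x, ((d * h t + c * t) - ∫ y, (d * h y + c * y) * p y) * p t
      = d * (∫ t in Iic x, (h t - ∫ y, h y * p y) * p t)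
        + c * ∫ t in Iic x, (t - ∫ y, y * p y) * p t := by
  have hM : ∫ y, (d * h y + c * y) * p y
      = d * (∫ y, h y * p y) + c * ∫ y, y * p y := by
    have e : (fun y => (d * h y + c * y) * p y)
        = fun y => d * (h y * p y) + c * (y * p y) := funext fun y => by ring
    rw [e, integral_add (hh.const_mul d) (hid.const_mul c), integral_const_mul,
      integral_const_mul]
  have hsub1 : Integrable (fun t => (h t - ∫ y, h y * p y) * p t) := by
    have e : (fun t => (h t - ∫ y, h y * p y) * p t)
        = fun t => h t * p t - (∫ y, h y * p y) * p t := funext fun t => by ring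
    rw [e]; exact hh.sub (hp.const_mul _)
  have hsub2 : Integrable (fun t => (t - ∫ y, y * p y) * p t) := by
    have e : (fun t => (t - ∫ y, y * p y) * p t)
        = fun t => t * p t - (∫ y, y * p y) * p t := funext fun t => by ring
    rw [e]; exact hid.sub (hp.const_mul _)
  have key : ∫ t in Iic x,
      ((d * h t + c * t) - ((d * ∫ y, h y * p y) + c * ∫ y, y * p y)) * p t
      = (∫ t in Iic x, d * ((h t - ∫ y, h y * p y) * p t))
        + ∫ t in Iic x, c * ((t - ∫ y, y * p y) * p t) := by
    rw [← integral_add ((hsub1.const_mul d).integrableOn) ((hsub2.const_mul c).integrableOn)]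
    exact integral_congr_ae (Eventually.of_forall fun t => by ring)
  rw [hM, key, integral_const_mul, integral_const_mul]

lemma lip_integrable (a b : EReal) (p : ℝ → ℝ) (h1 : Cond1 a b p)
    (hmom : Integrable (fun t => t * p t)) (h : ℝ → ℝ) (L : NNReal)
    (hL : LipschitzOnWith L h (ccE a b)) (x : ℝ) (hx : x ∈ ooE a b) :
    Integrable (fun t => h t * p t) := by
  have hxc : x ∈ ccE a b := ooE_subset_ccE a b hx
  have hmeas : AEStronglyMeasurable (fun t => h t * p t) volume := by
    have h1m : AEMeasurable ((ccE a b).indicator h) volume :=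
      (aemeasurable_indicator_iff (measurableSet_ccE a b)).2
        (ContinuousOn.aemeasurable hL.continuousOn (measurableSet_ccE a b))
    have heq : (fun t => h t * p t) = fun t => (ccE a b).indicator h t * p t := by
      funext t
      by_cases ht : t ∈ ccE a b
      · simp [indicator_of_mem ht]
      · have hp0 : p t = 0 := h1.zero t (fun hm => ht (ooE_subset_ccE a b hm))
        simp [indicator_of_notMem ht, hp0]
    rw [heq]
    exact (h1m.mul h1.meas.aemeasurable).aestronglyMeasurable
  set c : ℝ := |h x| + L * |x| with hc
  have hc0 : 0 ≤ c := by rw [hc]; positivity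
  have hbound : Integrable (fun t => c * p t + (L : ℝ) * |t * p t|) :=
    (h1.integrable.const_mul c).add ((hmom.abs).const_mul (L : ℝ))
  apply hbound.mono hmeas
  apply Eventually.of_forall
  intro t
  rw [Real.norm_eq_abs, Real.norm_eq_abs]
  have hRnn : 0 ≤ c * p t + (L : ℝ) * |t * p t| :=
    add_nonneg (mul_nonneg hc0 (h1.nonneg t)) (mul_nonneg (NNReal.coe_nonneg L) (abs_nonneg _))
  rw [abs_of_nonneg hRnn]
  by_cases ht : t ∈ ccE a b
  · have hd : |h t - h x| ≤ (L : ℝ) * |t - x| := by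
      have := hL.dist_le_mul t ht x hxc
      simpa [Real.dist_eq] using this
    have h1t : |h t| ≤ c + (L : ℝ) * |t| := by
      have e1 : |h t| ≤ |h x| + |h t - h x| := by
        have := abs_add_le (h x) (h t - h x)
        simpa using this
      have e2 : |t - x| ≤ |t| + |x| := abs_sub _ _
      have e3 : (L : ℝ) * |t - x| ≤ (L : ℝ) * (|t| + |x|) :=
        mul_le_mul_of_nonneg_left e2 (NNReal.coe_nonneg L)
      rw [hc]
      nlinarith [NNReal.coe_nonneg L]
    have hptn := h1.nonneg t
    have : |h t * p t| = |h t| * p t := by rw [abs_mul, abs_of_nonneg hptn]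
    rw [this]
    have habs : |t * p t| = |t| * p t := by rw [abs_mul, abs_of_nonneg hptn]
    rw [habs]
    nlinarith [abs_nonneg (h t), NNReal.coe_nonneg L]
  · have hp0 : p t = 0 := h1.zero t (fun hm => ht (ooE_subset_ccE a b hm))
    simp [hp0]

/-- Optimal bound for the standard solution for Lipschitz test functions:
`|g_h(x)| ≤ ‖h'‖ (∫_a^x (E[Z] - y) p(y) dy) / I(x)`, with equality for `h = id`. -/
theorem prop_gsol_lipschitz_bound (a b : EReal) (p γ : ℝ → ℝ)
    (h1 : Cond1 a b p) (h2 : Cond2 a b p γ)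
    (hmom : MeasureTheory.Integrable (fun x => x * p x)) :
    (∀ (h : ℝ → ℝ) (L : NNReal), LipschitzOnWith L h (ccE a b) →
      ∀ x ∈ ooE a b,
        |gsol γ p h x| ≤
          L * (∫ t in Iic x, ((∫ y, y * p y) - t) * p t) / Ifun γ p x) ∧
    (∀ x ∈ ooE a b,
      |gsol γ p (fun y => y) x| =
        (∫ t in Iic x, ((∫ y, y * p y) - t) * p t) / Ifun γ p x) := by
  have hgsol : ∀ (h : ℝ → ℝ) (x : ℝ), x ∈ ooE a b →
      gsol γ p h x = (∫ t in Iic x, (h t - meanOf p h) * p t) / Ifun γ p x := by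
    intro h x hx
    have hpx : p x ≠ 0 := (h1.pos x hx).ne'
    unfold gsol etaFun
    rw [show p x * (Ifun γ p x / p x) = Ifun γ p x from by field_simp]
  have hNid : ∀ x ∈ ooE a b, (∫ t in Iic x, (t - ∫ y, y * p y) * p t) ≤ 0 := by
    intro x hx
    exact N_nonpos a b p h1 x (fun t => t) hmom (fun t _ ht => ht) (fun t _ ht => ht.le)
  have hCeq : ∀ x : ℝ, (∫ t in Iic x, ((∫ y, y * p y) - t) * p t)
      = - ∫ t in Iic x, (t - ∫ y, y * p y) * p t := by
    intro x
    rw [← integral_neg]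
    exact integral_congr_ae (Eventually.of_forall fun t => by ring)
  constructor
  · intro h L hL x hx
    have hI0 := Ifun_nonneg a b p γ h1 h2 x hx
    have hh := lip_integrable a b p h1 hmom h L hL x hx
    have hxc := ooE_subset_ccE a b hx
    have hlip : ∀ t ∈ ooE a b, |h t - h x| ≤ (L : ℝ) * |t - x| := by
      intro t htm
      have := hL.dist_le_mul t (ooE_subset_ccE a b htm) x hxc
      simpa [Real.dist_eq] using this
    have hf1 : Integrable (fun t => ((1:ℝ) * h t + (L:ℝ) * t) * p t) := by
      have e : (fun t => ((1:ℝ) * h t + (L:ℝ) * t) * p t)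
          = fun t => (1:ℝ) * (h t * p t) + (L:ℝ) * (t * p t) := funext fun t => by ring
      rw [e]; exact (hh.const_mul 1).add (hmom.const_mul _)
    have hfm : Integrable (fun t => ((-1:ℝ) * h t + (L:ℝ) * t) * p t) := by
      have e : (fun t => ((-1:ℝ) * h t + (L:ℝ) * t) * p t)
          = fun t => (-1:ℝ) * (h t * p t) + (L:ℝ) * (t * p t) := funext fun t => by ring
      rw [e]; exact (hh.const_mul (-1)).add (hmom.const_mul _)
    have hplus : (1:ℝ) * (∫ t in Iic x, (h t - ∫ y, h y * p y) * p t)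
        + (L:ℝ) * (∫ t in Iic x, (t - ∫ y, y * p y) * p t) ≤ 0 := by
      rw [← N_comb p h1.integrable h 1 (L:ℝ) x hh hmom]
      refine N_nonpos a b p h1 x (fun t => (1:ℝ) * h t + (L:ℝ) * t) hf1 ?_ ?_
      · intro t htm ht
        have hd := hlip t htm
        rw [show |t - x| = x - t from by rw [abs_of_nonpos (by linarith)]; ring] at hd
        have h2d := abs_le.1 hd
        show (1:ℝ) * h t + (L:ℝ) * t ≤ (1:ℝ) * h x + (L:ℝ) * x
        nlinarith [h2d.1, h2d.2]
      · intro t htm ht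
        have hd := hlip t htm
        rw [abs_of_nonneg (by linarith : (0:ℝ) ≤ t - x)] at hd
        have h2d := abs_le.1 hd
        show (1:ℝ) * h x + (L:ℝ) * x ≤ (1:ℝ) * h t + (L:ℝ) * t
        nlinarith [h2d.1, h2d.2]
    have hminus : (-1:ℝ) * (∫ t in Iic x, (h t - ∫ y, h y * p y) * p t)
        + (L:ℝ) * (∫ t in Iic x, (t - ∫ y, y * p y) * p t) ≤ 0 := by
      rw [← N_comb p h1.integrable h (-1) (L:ℝ) x hh hmom]
      refine N_nonpos a b p h1 x (fun t => (-1:ℝ) * h t + (L:ℝ) * t) hfm ?_ ?_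
      · intro t htm ht
        have hd := hlip t htm
        rw [show |t - x| = x - t from by rw [abs_of_nonpos (by linarith)]; ring] at hd
        have h2d := abs_le.1 hd
        show (-1:ℝ) * h t + (L:ℝ) * t ≤ (-1:ℝ) * h x + (L:ℝ) * x
        nlinarith [h2d.1, h2d.2]
      · intro t htm ht
        have hd := hlip t htm
        rw [abs_of_nonneg (by linarith : (0:ℝ) ≤ t - x)] at hd
        have h2d := abs_le.1 hd
        show (-1:ℝ) * h x + (L:ℝ) * x ≤ (-1:ℝ) * h t + (L:ℝ) * t
        nlinarith [h2d.1, h2d.2]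
    rw [hgsol h x hx, hCeq x]
    simp only [meanOf]
    rcases eq_or_lt_of_le hI0 with hI | hI
    · rw [← hI]
      simp
    · rw [abs_div, abs_of_pos hI]
      apply (div_le_div_iff_of_pos_right hI).2
      rw [abs_le]
      constructor
      · nlinarith [hplus, hminus]
      · nlinarith [hplus, hminus]
  · intro x hx
    have hI0 := Ifun_nonneg a b p γ h1 h2 x hx
    rw [hgsol (fun y => y) x hx, hCeq x]
    have hnum : (∫ t in Iic x, ((fun y => y) t - meanOf p (fun y => y)) * p t)
        = ∫ t in Iic x, (t - ∫ y, y * p y) * p t := rfl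
    rw [hnum, abs_div, abs_of_nonneg hI0, abs_of_nonpos (hNid x hx)]

end
end
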